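/- Asymptotic behaviour of the mean excess function of the GLMGA distribution: for all a, b > 0 and 0 < σ < 1/2, letting F̄(u) = ∫_u^∞ f_{σ,a,b}(t) dt, the mean excess function e(u) = ( ∫_u^∞ y f_{σ,a,b}(y) dy ) / F̄(u) − u satisfies lim_{u→∞} e(u)/u = 2σ/(1 − 2σ). -/

import Mathlib

open MeasureTheory Real Filter Topology

/-- The (real) beta function `B(m,n) = ∫_0^1 t^(m-1) (1-t)^(n-1) dt`. -/
noncomputable def betaFn (m n : ℝ) : ℝ :=
  ∫ t in (0:ℝ)..1, t ^ (m - 1) * (1 - t) ^ (n - 1)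

/-- The regularized incomplete beta function `I_{m,n}(v)`. -/
noncomputable def regIncBeta (m n v : ℝ) : ℝ :=
  (∫ t in (0:ℝ)..v, t ^ (m - 1) * (1 - t) ^ (n - 1)) / betaFn m n

/-- The GLMGA density `f_{σ,a,b}`. -/
noncomputable def glmga (σ a b y : ℝ) : ℝ :=
  (2 * b) ^ a / (σ * betaFn a (1 / 2)) * y ^ (-(1 / (2 * σ) + 1))
    / (y ^ (-1 / σ) + 2 * b) ^ (a + 1 / 2)

/-!
The GLMGA density `f` is regularly varying at infinity: with `α = 1/(2σ)` it is
`O(y^(-(α+1)))` and its elasticity `y f'(y) / f(y)` tends to `-(α+1)`. For any such function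
`g` with elasticity tending to `-(γ+1)`, `γ > 0`, L'Hôpital's rule gives
`∫_u^∞ g ~ u g(u) / γ`. Applied to `f` (`γ = α`) and to `y f` (`γ = α - 1 > 0` since `σ < 1/2`),
this yields `∫_u^∞ y f / (u ∫_u^∞ f) → α / (α - 1) = 1 / (1 - 2σ)`, and hence
`e(u) / u → 2σ / (1 - 2σ)`.
-/

open Set Asymptotics

theorem intervalIntegrable_beta {m n : ℝ} (hm : 0 < m) (hn : 0 < n) :
    IntervalIntegrable (fun t : ℝ => t ^ (m - 1) * (1 - t) ^ (n - 1)) volume 0 1 := by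
  refine (Complex.betaIntegral_convergent (u := m) (v := n) (by simpa) (by simpa)).norm.congr_uIoo
    fun t ht => ?_
  rw [uIoo_of_le zero_le_one] at ht
  have h1t : 0 < 1 - t := sub_pos.2 ht.2
  simp only [← Complex.ofReal_one, ← Complex.ofReal_sub, ← Complex.ofReal_cpow ht.1.le,
    ← Complex.ofReal_cpow h1t.le, ← Complex.ofReal_mul, Complex.norm_real, norm_eq_abs]
  exact abs_of_pos (mul_pos (rpow_pos_of_pos ht.1 _) (rpow_pos_of_pos h1t _))

theorem betaFn_pos {m n : ℝ} (hm : 0 < m) (hn : 0 < n) : 0 < betaFn m n :=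
  intervalIntegral.intervalIntegral_pos_of_pos_on (intervalIntegrable_beta hm hn)
    (fun t ht => by have := sub_pos.2 ht.2; have := ht.1; positivity) one_pos

theorem hasDerivAt_integral_Ioi {g : ℝ → ℝ} {c u : ℝ} (hg : IntegrableOn g (Ioi c)) (hu : c < u)
    (hcont : ContinuousAt g u) : HasDerivAt (fun v => ∫ y in Ioi v, g y) (-g u) u := by
  have hmeas : StronglyMeasurableAtFilter g (𝓝 u) :=
    ⟨Ioi c, Ioi_mem_nhds hu, hg.aestronglyMeasurable⟩
  have hcu : IntervalIntegrable g volume c u :=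
    (intervalIntegrable_iff_integrableOn_Ioc_of_le hu.le).2 (hg.mono_set Ioc_subset_Ioi_self)
  refine ((intervalIntegral.integral_hasDerivAt_right hcu hmeas hcont).const_sub
    (∫ y in Ioi c, g y)).congr_of_eventuallyEq ?_
  filter_upwards [Ioi_mem_nhds hu] with v hv
  rw [← intervalIntegral.integral_Ioi_sub_Ioi hg hv.le, sub_sub_cancel]

theorem HasDerivAt.id_mul_of_elasticity {g ℓ : ℝ → ℝ} {u : ℝ}
    (hd : HasDerivAt g (g u * ℓ u / u) u) (hu : u ≠ 0) :
    HasDerivAt (fun v => v * g v) (u * g u * (1 + ℓ u) / u) u := by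
  refine ((hasDerivAt_id' u).mul hd).congr_deriv ?_
  field_simp

theorem Asymptotics.IsBigO.id_mul_rpow {g : ℝ → ℝ} {s : ℝ} (h : g =O[atTop] fun u => u ^ s) :
    (fun u => u * g u) =O[atTop] fun u => u ^ (s + 1) := by
  refine ((isBigO_refl (fun u : ℝ => u) atTop).mul h).congr' .rfl ?_
  filter_upwards [eventually_gt_atTop 0] with u hu
  rw [rpow_add_one hu.ne', mul_comm]

theorem tendsto_integral_Ioi_div_mul_self {g ℓ : ℝ → ℝ} {γ : ℝ} (hγ : 0 < γ)
    (hderiv : ∀ᶠ u in atTop, HasDerivAt g (g u * ℓ u / u) u)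
    (hg : ∀ᶠ u in atTop, g u ≠ 0)
    (hℓ : Tendsto ℓ atTop (𝓝 (-(γ + 1))))
    (hO : g =O[atTop] fun u => u ^ (-(γ + 1))) :
    Tendsto (fun u => (∫ y in Ioi u, g y) / (u * g u)) atTop (𝓝 γ⁻¹) := by
  obtain ⟨c, hc⟩ := eventually_atTop.1 hderiv
  have hmeas : StronglyMeasurableAtFilter g atTop :=
    ⟨Ioi c, Ioi_mem_atTop c, ContinuousOn.aestronglyMeasurable
      (fun u hu => (hc u hu.le).continuousAt.continuousWithinAt) measurableSet_Ioi⟩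
  obtain ⟨d, hd⟩ := integrableAtFilter_atTop_iff.1 <|
    hO.integrableAtFilter hmeas (integrableAtFilter_rpow_atTop_iff.2 (by linarith))
  have hzero : Tendsto (fun u => u * g u) atTop (𝓝 0) := by
    refine hO.id_mul_rpow.trans_tendsto ?_
    rw [show -(γ + 1) + 1 = -γ by ring]
    exact tendsto_rpow_neg_atTop hγ
  have hone_add : Tendsto (fun u => 1 + ℓ u) atTop (𝓝 (-γ)) := by
    simpa using hℓ.const_add 1
  have htail : ∀ᶠ u in atTop, HasDerivAt (fun v => ∫ y in Ioi v, g y) (-g u) u := by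
    filter_upwards [eventually_gt_atTop d, hderiv] with u hu hdu
    exact hasDerivAt_integral_Ioi (hd.mono_set Ioi_subset_Ici_self) hu hdu.continuousAt
  have hprod : ∀ᶠ u in atTop, HasDerivAt (fun v => v * g v) (g u * (1 + ℓ u)) u := by
    filter_upwards [eventually_gt_atTop 0, hderiv] with u hu hdu
    convert hdu.id_mul_of_elasticity hu.ne' using 1
    field_simp
  have hprod_ne : ∀ᶠ u in atTop, g u * (1 + ℓ u) ≠ 0 := by
    filter_upwards [hg, hone_add.eventually_ne (neg_ne_zero.2 hγ.ne')] with u h1 h2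
    exact mul_ne_zero h1 h2
  refine HasDerivAt.lhopital_zero_atTop htail hprod hprod_ne
    (tendsto_integral_Ioi_zero tendsto_id) hzero ?_
  have hlim := (hone_add.inv₀ (neg_ne_zero.2 hγ.ne')).neg
  rw [inv_neg, neg_neg] at hlim
  refine hlim.congr' ?_
  filter_upwards [hg] with u hu
  field_simp

/-- `y f'(y) / f(y)` for the GLMGA density `f`. -/
noncomputable def glmgaElasticity (σ a b y : ℝ) : ℝ :=
  (a + 1 / 2) / σ * (y ^ (-1 / σ) / (y ^ (-1 / σ) + 2 * b)) - (1 / (2 * σ) + 1)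

theorem tendsto_rpow_neg_one_div_atTop {σ : ℝ} (hσ : 0 < σ) :
    Tendsto (fun y : ℝ => y ^ (-1 / σ)) atTop (𝓝 0) := by
  simpa [neg_div] using tendsto_rpow_neg_atTop (one_div_pos.2 hσ)

section
variable {σ a b y : ℝ}

theorem glmga_eq_mul_rpow (hb : 0 < b) (hy : 0 < y) :
    glmga σ a b y = (2 * b) ^ a / (σ * betaFn a (1 / 2)) * y ^ (-(1 / (2 * σ) + 1)) *
      (y ^ (-1 / σ) + 2 * b) ^ (-(a + 1 / 2)) := by
  rw [glmga, div_eq_mul_inv _ ((y ^ (-1 / σ) + 2 * b) ^ (a + 1 / 2)), ← rpow_neg (by positivity)]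

theorem glmga_pos (hσ : 0 < σ) (ha : 0 < a) (hb : 0 < b) (hy : 0 < y) : 0 < glmga σ a b y := by
  have := betaFn_pos ha one_half_pos
  rw [glmga]
  positivity

theorem glmga_hasDerivAt (hb : 0 < b) (hy : 0 < y) :
    HasDerivAt (glmga σ a b) (glmga σ a b y * glmgaElasticity σ a b y / y) y := by
  have hD : 0 < y ^ (-1 / σ) + 2 * b := by positivity
  have hpow := (hasDerivAt_rpow_const (p := -(1 / (2 * σ) + 1)) (Or.inl hy.ne')).mul
    (((hasDerivAt_rpow_const (p := -1 / σ) (Or.inl hy.ne')).add_const (2 * b)).rpow_const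
      (p := -(a + 1 / 2)) (Or.inl hD.ne'))
  refine ((hpow.const_mul ((2 * b) ^ a / (σ * betaFn a (1 / 2)))).congr_of_eventuallyEq
    ?_).congr_deriv ?_
  · filter_upwards [Ioi_mem_nhds hy] with x hx
    rw [glmga_eq_mul_rpow hb hx, mul_assoc]
    rfl
  · rw [glmga_eq_mul_rpow hb hy, glmgaElasticity, rpow_sub hy, rpow_sub hy, rpow_sub hD, rpow_one,
      rpow_one]
    field_simp
    ring

theorem tendsto_glmgaElasticity (hσ : 0 < σ) (hb : 0 < b) :
    Tendsto (glmgaElasticity σ a b) atTop (𝓝 (-(1 / (2 * σ) + 1))) := by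
  have hpow := tendsto_rpow_neg_one_div_atTop hσ
  have := ((hpow.div (hpow.add_const (2 * b)) (by positivity)).const_mul
    ((a + 1 / 2) / σ)).sub_const (1 / (2 * σ) + 1)
  unfold glmgaElasticity
  simpa using this

theorem glmga_isBigO (hσ : 0 < σ) (hb : 0 < b) :
    glmga σ a b =O[atTop] fun y => y ^ (-(1 / (2 * σ) + 1)) := by
  have hpow := tendsto_rpow_neg_one_div_atTop hσ
  have hw : Tendsto (fun y : ℝ => (y ^ (-1 / σ) + 2 * b) ^ (-(a + 1 / 2))) atTop
      (𝓝 ((0 + 2 * b) ^ (-(a + 1 / 2)))) :=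
    (hpow.add_const (2 * b)).rpow_const (Or.inl (by positivity))
  have hO : (fun y : ℝ => y ^ (-(1 / (2 * σ) + 1)) * (y ^ (-1 / σ) + 2 * b) ^ (-(a + 1 / 2)))
      =O[atTop] fun y => y ^ (-(1 / (2 * σ) + 1)) * 1 :=
    (isBigO_refl (fun y : ℝ => y ^ (-(1 / (2 * σ) + 1))) atTop).mul (hw.isBigO_one ℝ)
  refine (hO.const_mul_left ((2 * b) ^ a / (σ * betaFn a (1 / 2)))).congr' ?_ ?_
  · filter_upwards [eventually_gt_atTop 0] with y hy
    rw [glmga_eq_mul_rpow hb hy, mul_assoc]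
  · simp
end

/-- asymptotic behaviour of the mean excess function of the GLMGA
distribution. -/
theorem glmga_mean_excess_asymptotics (σ a b : ℝ) (hσ : 0 < σ) (hσ2 : σ < 1 / 2)
    (ha : 0 < a) (hb : 0 < b) :
    Tendsto
      (fun u : ℝ =>
        ((∫ y in Set.Ioi u, y * glmga σ a b y) / (∫ y in Set.Ioi u, glmga σ a b y) - u) / u)
      atTop (𝓝 (2 * σ / (1 - 2 * σ))) := by
  have hα : 1 < 1 / (2 * σ) := by rw [lt_div_iff₀ (by linarith)]; linarith
  have hderiv : ∀ᶠ u in atTop, HasDerivAt (glmga σ a b)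
      (glmga σ a b u * glmgaElasticity σ a b u / u) u :=
    eventually_gt_atTop 0 |>.mono fun u hu => glmga_hasDerivAt hb hu
  have hne : ∀ᶠ u in atTop, glmga σ a b u ≠ 0 :=
    eventually_gt_atTop 0 |>.mono fun u hu => (glmga_pos hσ ha hb hu).ne'
  have hsurv := tendsto_integral_Ioi_div_mul_self (by linarith) hderiv hne
    (tendsto_glmgaElasticity hσ hb) (glmga_isBigO hσ hb)
  have hfirst := tendsto_integral_Ioi_div_mul_self (g := fun y => y * glmga σ a b y)
    (ℓ := fun y => 1 + glmgaElasticity σ a b y) (γ := 1 / (2 * σ) - 1) (by linarith)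
    (by filter_upwards [eventually_gt_atTop 0, hderiv] with u hu hd
        exact hd.id_mul_of_elasticity hu.ne')
    (by filter_upwards [eventually_gt_atTop 0, hne] with u hu h using mul_ne_zero hu.ne' h)
    (by simpa using (tendsto_glmgaElasticity hσ hb (a := a)).const_add 1)
    (by simpa using (glmga_isBigO hσ hb (a := a)).id_mul_rpow)
  have hlim := (hfirst.div hsurv (by positivity)).sub_const 1
  have h2σ : 1 - 2 * σ ≠ 0 := by linarith
  rw [show (1 / (2 * σ) - 1)⁻¹ / (1 / (2 * σ))⁻¹ - 1 = 2 * σ / (1 - 2 * σ) by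
    field_simp; ring] at hlim
  refine hlim.congr' ?_
  filter_upwards [eventually_gt_atTop 0, hne] with u hu hfu
  rw [Pi.div_apply, ← div_div, div_div_div_cancel_right₀ (mul_ne_zero hu.ne' hfu),
    div_right_comm, sub_div, div_self hu.ne']
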